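/- Let d be even and x a positive integer with F_{kd}/F_d ≤ x < F_{(k+1)d}/F_d for some k > 1. If λ_1, …, λ_k are the greedy coefficients of x with respect to 1, F_{2d}/F_d, …, F_{kd}/F_d, then 0 ≤ λ_i ≤ L_d − 1 for all 1 ≤ i ≤ k, and λ_k ≥ 1. -/
import Mathlib

def lucas : ℕ → ℕ
  | 0 => 2
  | 1 => 1
  | n + 2 => lucas (n + 1) + lucas n

/-- the `i`-th greedy weight `F_{id}/F_d`. -/
def gw (d i : ℕ) : ℕ := Nat.fib (i * d) / Nat.fib d

/-- `gRem d k x m` is the remaining value after the greedy algorithm for `x`,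
with respect to the weights `gw d 1, …, gw d k`, has processed the top `m`
indices `k, k-1, …, k-m+1`. -/
def gRem (d k x : ℕ) : ℕ → ℕ
  | 0 => x
  | m + 1 => gRem d k x m % gw d (k - m)

/-- the `i`-th greedy coefficient `λ_i` of `x` w.r.t. `gw d 1, …, gw d k`:
`λ_i = ⌊(x − ∑_{j>i} λ_j · gw d j) / gw d i⌋`. -/
def gLam (d k x i : ℕ) : ℕ := gRem d k x (k - i) / gw d i

open Nat

lemma lucas_eq : ∀ n, lucas (n + 1) = Nat.fib n + Nat.fib (n + 2) := by
  intro n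
  induction n using Nat.twoStepInduction with
  | zero => rfl
  | one => rfl
  | more n ih1 ih2 =>
    show lucas (n + 2) + lucas (n + 1) = _
    rw [ih1, ih2, fib_add_two (n := n + 2), fib_add_two (n := n)]
    ring

lemma lucas_pos (n : ℕ) : 0 < lucas n := by
  cases n with
  | zero => norm_num [lucas]
  | succ m =>
    rw [lucas_eq]
    have := Nat.fib_pos.mpr (show 0 < m + 2 by omega)
    omega

lemma cassini (n : ℕ) :
    (Nat.fib (n + 2) : ℤ) * Nat.fib n = (Nat.fib (n + 1) : ℤ) ^ 2 + (-1) ^ (n + 1) := by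
  induction n with
  | zero => simp
  | succ m ih =>
    show (Nat.fib (m + 3) : ℤ) * Nat.fib (m + 1) = (Nat.fib (m + 2) : ℤ) ^ 2 + (-1) ^ (m + 2)
    have h3 : (Nat.fib (m + 3) : ℤ) = Nat.fib (m + 1) + Nat.fib (m + 2) := by
      rw [show m + 3 = (m + 1) + 2 from rfl, fib_add_two]; push_cast; ring
    have h2 : (Nat.fib (m + 2) : ℤ) = Nat.fib m + Nat.fib (m + 1) := by
      rw [fib_add_two]; push_cast; ring
    have hp : (-1 : ℤ) ^ (m + 2) = -(-1 : ℤ) ^ (m + 1) := by ring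
    rw [h3, hp]
    nlinarith [ih]

lemma key (n : ℕ) (hn : 1 ≤ n) (he : Even n) :
    ∀ j, Nat.fib (n + j + n) + Nat.fib j = lucas n * Nat.fib (n + j) := by
  intro j
  induction j using Nat.twoStepInduction with
  | zero =>
    obtain ⟨m, rfl⟩ : ∃ m, n = m + 1 := ⟨n - 1, by omega⟩
    rw [show m + 1 + 0 + (m + 1) = 2 * (m + 1) from by ring,
        show m + 1 + 0 = m + 1 from by ring, fib_zero]
    have ht : Nat.fib (2 * (m + 1)) = Nat.fib (m + 1) * (2 * Nat.fib (m + 2) - Nat.fib (m + 1)) :=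
      Nat.fib_two_mul (m + 1)
    have hl : lucas (m + 1) = Nat.fib m + Nat.fib (m + 2) := lucas_eq m
    have h2 : Nat.fib (m + 2) = Nat.fib m + Nat.fib (m + 1) := fib_add_two
    have hs : 2 * Nat.fib (m + 2) - Nat.fib (m + 1) = 2 * Nat.fib m + Nat.fib (m + 1) := by omega
    rw [ht, hl, hs, h2]
    ring
  | one =>
    obtain ⟨m, rfl⟩ : ∃ m, n = m + 2 := ⟨n - 2, by rcases he with ⟨t, ht⟩; omega⟩
    rw [show m + 2 + 1 + (m + 2) = 2 * (m + 2) + 1 from by ring]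
    have ht : Nat.fib (2 * (m + 2) + 1) = Nat.fib (m + 3) ^ 2 + Nat.fib (m + 2) ^ 2 :=
      Nat.fib_two_mul_add_one (m + 2)
    have hl : lucas (m + 2) = Nat.fib (m + 1) + Nat.fib (m + 3) := lucas_eq (m + 1)
    have hf : Nat.fib (m + 2 + 1) = Nat.fib (m + 3) := rfl
    have hc : (Nat.fib (m + 3) : ℤ) * Nat.fib (m + 1)
        = (Nat.fib (m + 2) : ℤ) ^ 2 + (-1) ^ (m + 2) := cassini (m + 1)
    have hp : ((-1 : ℤ)) ^ (m + 2) = 1 := Even.neg_one_pow he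
    rw [hp] at hc
    have key2 : Nat.fib (m + 2) ^ 2 + 1 = Nat.fib (m + 1) * Nat.fib (m + 3) := by
      zify
      linarith [hc]
    rw [ht, hl, hf, fib_one]
    nlinarith [key2]
  | more j ihj ihj1 =>
    have i2 : Nat.fib (n + j + n + 1) + Nat.fib (j + 1) = lucas n * Nat.fib (n + j + 1) := by
      have := ihj1
      rwa [show n + (j + 1) + n = n + j + n + 1 from by ring,
           show n + (j + 1) = n + j + 1 from by ring] at this
    rw [show n + (j + 2) + n = (n + j + n) + 2 from by ring,
        show n + (j + 2) = (n + j) + 2 from by ring,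
        fib_add_two (n := n + j + n), fib_add_two (n := j), fib_add_two (n := n + j)]
    have hd : lucas n * (Nat.fib (n + j) + Nat.fib (n + j + 1))
        = lucas n * Nat.fib (n + j + 1) + lucas n * Nat.fib (n + j) := by ring
    rw [hd]
    linarith [i2, ihj]

lemma fibd_dvd (d i : ℕ) : Nat.fib d ∣ Nat.fib (i * d) :=
  Nat.fib_dvd _ _ (dvd_mul_left d i)

lemma gw_pos (d i : ℕ) (hd : 0 < d) (hi : 0 < i) : 0 < gw d i := by
  unfold gw
  have h1 : Nat.fib d ≤ Nat.fib (i * d) :=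
    Nat.fib_mono (Nat.le_mul_of_pos_left d hi)
  exact Nat.div_pos h1 (Nat.fib_pos.mpr hd)

lemma gw_step (d i : ℕ) (hd : 1 ≤ d) (he : Even d) (hi : 1 ≤ i) :
    gw d (i + 1) ≤ lucas d * gw d i := by
  obtain ⟨m, rfl⟩ : ∃ m, i = m + 1 := ⟨i - 1, by omega⟩
  have hk := key d hd he (m * d)
  rw [show d + m * d + d = (m + 1 + 1) * d from by ring,
      show d + m * d = (m + 1) * d from by ring] at hk
  have hineq : Nat.fib ((m + 1 + 1) * d) ≤ lucas d * Nat.fib ((m + 1) * d) := by omega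
  have := Nat.div_le_div_right (c := Nat.fib d) hineq
  calc gw d (m + 1 + 1) = Nat.fib ((m + 1 + 1) * d) / Nat.fib d := rfl
    _ ≤ lucas d * Nat.fib ((m + 1) * d) / Nat.fib d := this
    _ = lucas d * (Nat.fib ((m + 1) * d) / Nat.fib d) :=
        Nat.mul_div_assoc _ (fibd_dvd d (m + 1))
    _ = lucas d * gw d (m + 1) := rfl

theorem greedy_coeff_bounds (d k x : ℕ) (hd : 0 < d) (hde : Even d) (hk : 1 < k)
    (hx : 0 < x)
    (hx1 : Nat.fib (k * d) / Nat.fib d ≤ x)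
    (hx2 : x < Nat.fib ((k + 1) * d) / Nat.fib d) :
    (∀ i, 1 ≤ i → i ≤ k → gLam d k x i ≤ lucas d - 1) ∧ 1 ≤ gLam d k x k := by
  have hw : ∀ i, 0 < i → 0 < gw d i := fun i hi => gw_pos d i hd hi
  have hrem : ∀ i, 1 ≤ i → i ≤ k → gRem d k x (k - i) < gw d (i + 1) := by
    intro i h1 h2
    rcases eq_or_lt_of_le h2 with h | h
    · subst h
      rw [Nat.sub_self]
      show x < gw d (i + 1)
      exact hx2
    · have e : k - i = (k - i - 1) + 1 := by omega
      rw [e]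
      show gRem d k x (k - i - 1) % gw d (k - (k - i - 1)) < gw d (i + 1)
      rw [show k - (k - i - 1) = i + 1 from by omega]
      exact Nat.mod_lt _ (hw (i + 1) (by omega))
  constructor
  · intro i h1 h2
    have hlt : gLam d k x i < lucas d := by
      show gRem d k x (k - i) / gw d i < lucas d
      rw [Nat.div_lt_iff_lt_mul (hw i (by omega))]
      calc gRem d k x (k - i) < gw d (i + 1) := hrem i h1 h2
        _ ≤ lucas d * gw d i := gw_step d i (by omega) hde h1
    omega
  · show gRem d k x (k - k) / gw d k ≥ 1
    rw [Nat.sub_self]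
    show 1 ≤ x / gw d k
    rw [Nat.one_le_div_iff (hw k (by omega))]
    exact hx1
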